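/- Under the setting above, for every x ∈ ℝⁿ: Φ(prox^{D₁}_{λg}(x)) + (1/(2mλ) − m/(2μ))‖prox^{D₁}_{λg}(x) − x‖² ≤ Φ_{λ,μ}(x) ≤ Φ(prox^{D₂}_{μf}(x)) + (m/(2λ) − 1/(2mμ))‖prox^{D₂}_{μf}(x) − x‖², where Φ = g − f. -/

import Mathlib

/-! Each prox point minimises its envelope, so evaluating the `f`-envelope at `prox_g x` (resp. the
`g`-envelope at `prox_f x`) bounds `Φ_{λ,μ}(x)` by `Φ` at that point plus the difference of the two
`D`-weighted quadratic terms. Expanding `uᵀ D u` in an eigenbasis of `D`, the eigenvalue bounds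
`1/m ≤ λᵢ(D) ≤ m` turn those terms into multiples of `‖u‖²`. -/

open Matrix

/-- The quadratic form `uᵀ D u` on Euclidean space, i.e. `‖u‖²_D`. -/
def quadD {n : ℕ} (D : Matrix (Fin n) (Fin n) ℝ) (u : EuclideanSpace ℝ (Fin n)) : ℝ :=
  (WithLp.equiv 2 (Fin n → ℝ) u) ⬝ᵥ D.mulVec (WithLp.equiv 2 (Fin n → ℝ) u)

/-- `D * u` as a vector of Euclidean space. -/
noncomputable def mulVecE {n : ℕ} (D : Matrix (Fin n) (Fin n) ℝ)
    (u : EuclideanSpace ℝ (Fin n)) : EuclideanSpace ℝ (Fin n) :=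
  (WithLp.equiv 2 (Fin n → ℝ)).symm (D.mulVec (WithLp.equiv 2 (Fin n → ℝ) u))

open scoped InnerProductSpace

lemma quadD_eq_inner_toEuclideanLin {n : ℕ} (A : Matrix (Fin n) (Fin n) ℝ)
    (u : EuclideanSpace ℝ (Fin n)) : quadD A u = ⟪u, toEuclideanLin A u⟫_ℝ := by
  simp [quadD, toLpLin_apply, PiLp.inner_apply, dotProduct, mul_comm]

namespace Matrix.IsHermitian

variable {n : ℕ} {A : Matrix (Fin n) (Fin n) ℝ}

lemma quadD_eq_sum_eigenvalues (hA : A.IsHermitian) (u : EuclideanSpace ℝ (Fin n)) :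
    quadD A u = ∑ i, hA.eigenvalues i * ⟪hA.eigenvectorBasis i, u⟫_ℝ ^ 2 := by
  have hsymm := isSymmetric_toEuclideanLin_iff.mpr hA
  have hcoord : ∀ i, ⟪hA.eigenvectorBasis i, toEuclideanLin A u⟫_ℝ
      = hA.eigenvalues i * ⟪hA.eigenvectorBasis i, u⟫_ℝ := by
    intro i
    have heig : toEuclideanLin A (hA.eigenvectorBasis i)
        = hA.eigenvalues i • hA.eigenvectorBasis i :=
      congr_arg (WithLp.toLp 2) (hA.mulVec_eigenvectorBasis i)
    rw [← hsymm, heig, real_inner_smul_left]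
  rw [quadD_eq_inner_toEuclideanLin, ← hA.eigenvectorBasis.sum_inner_mul_inner]
  refine Finset.sum_congr rfl fun i _ => ?_
  rw [hcoord, real_inner_comm u]
  ring

lemma mul_norm_sq_le_quadD (hA : A.IsHermitian) {a : ℝ} (ha : ∀ i, a ≤ hA.eigenvalues i)
    (u : EuclideanSpace ℝ (Fin n)) : a * ‖u‖ ^ 2 ≤ quadD A u := by
  rw [quadD_eq_sum_eigenvalues hA, ← hA.eigenvectorBasis.sum_sq_inner_right, Finset.mul_sum]
  exact Finset.sum_le_sum fun i _ => mul_le_mul_of_nonneg_right (ha i) (sq_nonneg _)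

lemma quadD_le_mul_norm_sq (hA : A.IsHermitian) {b : ℝ} (hb : ∀ i, hA.eigenvalues i ≤ b)
    (u : EuclideanSpace ℝ (Fin n)) : quadD A u ≤ b * ‖u‖ ^ 2 := by
  rw [quadD_eq_sum_eigenvalues hA, ← hA.eigenvectorBasis.sum_sq_inner_right, Finset.mul_sum]
  exact Finset.sum_le_sum fun i _ => mul_le_mul_of_nonneg_right (hb i) (sq_nonneg _)

end Matrix.IsHermitian

theorem stmt_11_general {n : ℕ} (m lam mu : ℝ) (hlam : 0 < lam) (hmu : 0 < mu)
    (D₁ D₂ : Matrix (Fin n) (Fin n) ℝ) (hD₁ : D₁.PosDef) (hD₂ : D₂.PosDef)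
    (heig₁ : ∀ i, hD₁.1.eigenvalues i ∈ Set.Icc (1/m) m)
    (heig₂ : ∀ i, hD₂.1.eigenvalues i ∈ Set.Icc (1/m) m)
    (g f : EuclideanSpace ℝ (Fin n) → ℝ)
    (pg pf : EuclideanSpace ℝ (Fin n) → EuclideanSpace ℝ (Fin n))
    (hpg : ∀ x w, g (pg x) + quadD D₁ (pg x - x) / (2*lam)
            ≤ g w + quadD D₁ (w - x) / (2*lam))
    (hpf : ∀ x w, f (pf x) + quadD D₂ (pf x - x) / (2*mu)
            ≤ f w + quadD D₂ (w - x) / (2*mu))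
    (x : EuclideanSpace ℝ (Fin n)) :
    (g (pg x) - f (pg x)) + (1/(2*m*lam) - m/(2*mu)) * ‖pg x - x‖^2
      ≤ (g (pg x) + quadD D₁ (pg x - x) / (2*lam))
          - (f (pf x) + quadD D₂ (pf x - x) / (2*mu)) ∧
    (g (pg x) + quadD D₁ (pg x - x) / (2*lam))
          - (f (pf x) + quadD D₂ (pf x - x) / (2*mu))
      ≤ (g (pf x) - f (pf x)) + (m/(2*lam) - 1/(2*m*mu)) * ‖pf x - x‖^2 := by
  set u := pg x - x
  set v := pf x - x
  have hD₁u := hD₁.1.mul_norm_sq_le_quadD (fun i => (heig₁ i).1) u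
  have hD₂u := hD₂.1.quadD_le_mul_norm_sq (fun i => (heig₂ i).2) u
  have hD₁v := hD₁.1.quadD_le_mul_norm_sq (fun i => (heig₁ i).2) v
  have hD₂v := hD₂.1.mul_norm_sq_le_quadD (fun i => (heig₂ i).1) v
  constructor
  · have hf_le := hpf x (pg x)
    calc _ = g (pg x) - f (pg x) + 1/m * ‖u‖^2 / (2*lam) - m * ‖u‖^2 / (2*mu) := by ring
      _ ≤ g (pg x) - f (pg x) + quadD D₁ u / (2*lam) - quadD D₂ u / (2*mu) := by gcongr
      _ ≤ _ := by linarith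
  · have hg_le := hpg x (pf x)
    calc _ ≤ g (pf x) - f (pf x) + quadD D₁ v / (2*lam) - quadD D₂ v / (2*mu) := by linarith
      _ ≤ g (pf x) - f (pf x) + m * ‖v‖^2 / (2*lam) - 1/m * ‖v‖^2 / (2*mu) := by gcongr
      _ = _ := by ring

theorem stmt_11 {n : ℕ} (m lam mu : ℝ) (hm : 1 ≤ m) (hlam : 0 < lam) (hmu : 0 < mu)
    (D₁ D₂ : Matrix (Fin n) (Fin n) ℝ) (hD₁ : D₁.PosDef) (hD₂ : D₂.PosDef)
    (heig₁ : ∀ i, hD₁.1.eigenvalues i ∈ Set.Icc (1/m) m)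
    (heig₂ : ∀ i, hD₂.1.eigenvalues i ∈ Set.Icc (1/m) m)
    (g f : EuclideanSpace ℝ (Fin n) → ℝ)
    (hg : ConvexOn ℝ Set.univ g) (hf : ConvexOn ℝ Set.univ f)
    (hglsc : LowerSemicontinuous g) (hflsc : LowerSemicontinuous f)
    (pg pf : EuclideanSpace ℝ (Fin n) → EuclideanSpace ℝ (Fin n))
    (hpg : ∀ x w, g (pg x) + quadD D₁ (pg x - x) / (2*lam)
            ≤ g w + quadD D₁ (w - x) / (2*lam))
    (hpf : ∀ x w, f (pf x) + quadD D₂ (pf x - x) / (2*mu)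
            ≤ f w + quadD D₂ (w - x) / (2*mu))
    (x : EuclideanSpace ℝ (Fin n)) :
    (g (pg x) - f (pg x)) + (1/(2*m*lam) - m/(2*mu)) * ‖pg x - x‖^2
      ≤ (g (pg x) + quadD D₁ (pg x - x) / (2*lam))
          - (f (pf x) + quadD D₂ (pf x - x) / (2*mu)) ∧
    (g (pg x) + quadD D₁ (pg x - x) / (2*lam))
          - (f (pf x) + quadD D₂ (pf x - x) / (2*mu))
      ≤ (g (pf x) - f (pf x)) + (m/(2*lam) - 1/(2*m*mu)) * ‖pf x - x‖^2 :=
  stmt_11_general m lam mu hlam hmu D₁ D₂ hD₁ hD₂ heig₁ heig₂ g f pg pf hpg hpf x
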